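/- Let (A, ∘, •) be a totally compatible di-algebra over a commutative ring k. For all natural numbers i, j, k', l, every list x₀, …, x_{i+j} of i+j+1 elements of A and every list y₀, …, y_{k'+l} of k'+l+1 elements of A, one has μ_{i,j}(x₀,…,x_{i+j}) ∘ μ_{k',l}(y₀,…,y_{k'+l}) = μ_{i+k'+1, j+l}(x₀,…,x_{i+j}, y₀,…,y_{k'+l}). -/

import Mathlib

/-- A pair of `k`-bilinear operations `a` ("∘") and `b` ("•") on a `k`-module `A`
is a *totally compatible di-algebra structure* if `a` and `b` are each associative
and `(x∘y)•z = x∘(y•z) = (x•y)∘z = x•(y∘z)` for all `x y z`. -/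
def IsTotallyCompatibleDialgebra {k A : Type*} [CommRing k] [AddCommGroup A] [Module k A]
    (a b : A →ₗ[k] A →ₗ[k] A) : Prop :=
  (∀ x y z : A, a (a x y) z = a x (a y z)) ∧
  (∀ x y z : A, b (b x y) z = b x (b y z)) ∧
  (∀ x y z : A, b (a x y) z = a x (b y z)) ∧
  (∀ x y z : A, a x (b y z) = a (b x y) z) ∧
  (∀ x y z : A, a (b x y) z = b x (a y z))

/-- The left-associated product `(⋯((x₀ op₁ x₁) op₂ x₂) ⋯ opₙ xₙ)`, where the
operations are recorded as booleans paired with the elements: `true` stands for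
the operation `a` ("∘") and `false` for `b` ("•"). -/
def leftAssocProd {k A : Type*} [CommRing k] [AddCommGroup A] [Module k A]
    (a b : A →ₗ[k] A →ₗ[k] A) (x₀ : A) (l : List (Bool × A)) : A :=
  l.foldl (fun acc p => if p.1 then a acc p.2 else b acc p.2) x₀

/-- The operation `μ_{i,j}` of a totally compatible di-algebra, applied to a list
`x₀ :: [x₁, …, x_{i+j}]` of `i + j + 1` elements:
`μ_{i,j}(x₀,…,x_{i+j}) = (((x₀ ∘ x₁) ∘ ⋯ ∘ x_i) • x_{i+1}) • ⋯ • x_{i+j}`,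
the left-associated product whose first `i` operations are `∘` (i.e. `a`) and
whose last `j` operations are `•` (i.e. `b`).  (On the empty list, which never
occurs under the length hypotheses below, it is defined to be `0`.) -/
def muOp {k A : Type*} [CommRing k] [AddCommGroup A] [Module k A]
    (a b : A →ₗ[k] A →ₗ[k] A) (i j : ℕ) : List A → A
  | [] => 0
  | x₀ :: xs => leftAssocProd a b x₀ ((List.replicate i true ++ List.replicate j false).zip xs)

/-! Since `x ∘ (y op₁ z₁ ⋯ opₙ zₙ) = (x ∘ y) op₁ z₁ ⋯ opₙ zₙ`, the left-hand side is one
left-associated product, with operation word `∘ⁱ •ʲ ∘ ∘ᵏ' •ˡ`. Total compatibility gives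
`(x ∘ y) • z = (x • y) ∘ z`, so adjacent operations may be swapped: a left-associated product
depends only on the multiset of its operations, and the word can be sorted to `∘ⁱ⁺ᵏ'⁺¹ •ʲ⁺ˡ`. -/

theorem leftAssocProd_append {k A : Type*} [CommRing k] [AddCommGroup A] [Module k A]
    (a b : A →ₗ[k] A →ₗ[k] A) (x : A) (l₁ l₂ : List (Bool × A)) :
    leftAssocProd a b x (l₁ ++ l₂) = leftAssocProd a b (leftAssocProd a b x l₁) l₂ :=
  List.foldl_append

namespace IsTotallyCompatibleDialgebra

variable {k A : Type*} [CommRing k] [AddCommGroup A] [Module k A] {a b : A →ₗ[k] A →ₗ[k] A}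

theorem b_a_eq_a_b (h : IsTotallyCompatibleDialgebra a b) (x y z : A) :
    b (a x y) z = a (b x y) z :=
  (h.2.2.1 x y z).trans (h.2.2.2.1 x y z)

theorem a_leftAssocProd (h : IsTotallyCompatibleDialgebra a b) (x y : A)
    (l : List (Bool × A)) : a x (leftAssocProd a b y l) = leftAssocProd a b (a x y) l := by
  induction l generalizing y with
  | nil => rfl
  | cons p l ih =>
    obtain ⟨_ | _, z⟩ := p
    · exact (ih (b y z)).trans (congrArg (leftAssocProd a b · l) (h.2.2.1 x y z).symm)
    · exact (ih (a y z)).trans (congrArg (leftAssocProd a b · l) (h.1 x y z).symm)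

theorem leftAssocProd_zip_perm (h : IsTotallyCompatibleDialgebra a b) {bs₁ bs₂ : List Bool}
    (hp : bs₁.Perm bs₂) (x : A) (zs : List A) (hlen : bs₁.length ≤ zs.length) :
    leftAssocProd a b x (bs₁.zip zs) = leftAssocProd a b x (bs₂.zip zs) := by
  induction hp generalizing x zs with
  | nil => rfl
  | cons c _ ih =>
    obtain _ | ⟨z, zs⟩ := zs
    · simp at hlen
    · exact ih _ zs (by simpa using hlen)
  | swap c d _ =>
    obtain _ | ⟨z₁, _ | ⟨z₂, zs⟩⟩ := zs
    · simp at hlen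
    · simp at hlen
    · simp only [List.zip_cons_cons, leftAssocProd, List.foldl_cons]
      congr 1
      cases c <;> cases d <;> simp [h.b_a_eq_a_b]
  | trans p _ ih₁ ih₂ =>
    exact (ih₁ x zs hlen).trans (ih₂ x zs (p.length_eq ▸ hlen))

end IsTotallyCompatibleDialgebra

/-- `μ_{i,j}(x₀,…,x_{i+j}) ∘ μ_{k',l}(y₀,…,y_{k'+l})
  = μ_{i+k'+1, j+l}(x₀,…,x_{i+j}, y₀,…,y_{k'+l})`. -/
theorem muOp_comp_left
    {k A : Type*} [CommRing k] [AddCommGroup A] [Module k A]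
    (a b : A →ₗ[k] A →ₗ[k] A) (h : IsTotallyCompatibleDialgebra a b)
    (i j k' l : ℕ) (x₀ : A) (xs : List A) (hx : xs.length = i + j)
    (y₀ : A) (ys : List A) (hy : ys.length = k' + l) :
    a (muOp a b i j (x₀ :: xs)) (muOp a b k' l (y₀ :: ys))
      = muOp a b (i + k' + 1) (j + l) (x₀ :: (xs ++ y₀ :: ys)) := by
  set ops₁ := List.replicate i true ++ List.replicate j false
  set ops₂ := List.replicate k' true ++ List.replicate l false
  have hzip : (ops₁ ++ true :: ops₂).zip (xs ++ y₀ :: ys)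
      = ops₁.zip xs ++ (true, y₀) :: ops₂.zip ys :=
    List.zip_append (by simp [ops₁, hx])
  have hperm : (ops₁ ++ true :: ops₂).Perm
      (List.replicate (i + k' + 1) true ++ List.replicate (j + l) false) := by
    rw [List.perm_iff_count]
    rintro (_ | _)
    · simp [ops₁, ops₂, List.count_replicate]
    · simp [ops₁, ops₂, List.count_replicate]
      omega
  calc a (muOp a b i j (x₀ :: xs)) (muOp a b k' l (y₀ :: ys))
      = a (leftAssocProd a b x₀ (ops₁.zip xs)) (leftAssocProd a b y₀ (ops₂.zip ys)) := rfl
    _ = leftAssocProd a b (a (leftAssocProd a b x₀ (ops₁.zip xs)) y₀) (ops₂.zip ys) :=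
        h.a_leftAssocProd _ _ _
    _ = leftAssocProd a b x₀ ((ops₁ ++ true :: ops₂).zip (xs ++ y₀ :: ys)) := by
        rw [hzip, leftAssocProd_append]
        rfl
    _ = _ := h.leftAssocProd_zip_perm hperm x₀ _ (by simp [ops₁, ops₂, hx, hy]; omega)
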